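/- Brzozowski's theorem: for any NFA N, the automaton N' = [reachable ∘ determinize ∘ reverse]²(N), obtained by twice applying reversal, subset-construction determinization, and removal of states unreachable from the initial states, is the minimal DFA accepting the same language as N. -/

import Mathlib

/-- The reversal of an NFA: swap initial and accepting states and reverse all transitions. -/
def nfaRev {α σ : Type*} (N : NFA α σ) : NFA α σ where
  step s a := {s' | s ∈ N.step s' a}
  start := N.accept
  accept := N.start

/-- The reversal of a DFA: the NFA with initial states `Acc`, accepting states `{s₀}`,
and reversed transitions. -/
def dfaRev {α σ : Type*} (A : DFA α σ) : NFA α σ where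
  step s a := {s' | A.step s' a = s}
  start := A.accept
  accept := {A.start}

/-- The set of states of a DFA reachable from the initial state by some word. -/
def reach {α σ : Type*} (D : DFA α σ) : Set σ := {q | ∃ w : List α, D.evalFrom D.start w = q}

/-- The DFA obtained by removing all states unreachable from the initial state. -/
def restrictReach {α σ : Type*} (D : DFA α σ) : DFA α (reach D) where
  step q a := ⟨D.step q.1 a, by
    obtain ⟨w, hw⟩ := q.2
    exact ⟨w ++ [a], by rw [DFA.evalFrom_append_singleton, hw]⟩⟩
  start := ⟨D.start, ⟨[], rfl⟩⟩
  accept := {q | q.1 ∈ D.accept}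

/-- A DFA is minimal if every state is reachable from the initial state and no two distinct
states accept the same residual language. -/
def IsMinimal {α σ : Type*} (D : DFA α σ) : Prop :=
  (∀ q : σ, ∃ w : List α, D.evalFrom D.start w = q) ∧
    ∀ q q' : σ, D.acceptsFrom q = D.acceptsFrom q' → q = q'

/-!
If every state of a DFA `A` is reachable, then in the subset automaton of its reversal a set `S`
of states accepts a word `w` exactly when `A` reaches a state of `S` on `w.reverse`; since every
state is reached by some word, `S` is determined by its residual language. Applying this to the
reachable part of the determinized reversal of `N`, and then discarding unreachable states, gives a
DFA that is reachable with pairwise distinct residuals, i.e. minimal. Both reversals reverse the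
language, so the language of `N` is preserved.
-/

section

variable {α σ : Type*}

theorem coe_restrictReach_evalFrom (D : DFA α σ) (q : reach D) (w : List α) :
    ((restrictReach D).evalFrom q w : σ) = D.evalFrom q w := by
  induction w generalizing q with
  | nil => rfl
  | cons a w ih => exact ih ((restrictReach D).step q a)

theorem exists_restrictReach_evalFrom_start_eq (D : DFA α σ) (q : reach D) :
    ∃ w : List α, (restrictReach D).evalFrom (restrictReach D).start w = q := by
  obtain ⟨w, hw⟩ := q.2
  exact ⟨w, Subtype.ext ((coe_restrictReach_evalFrom D _ w).trans hw)⟩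

theorem restrictReach_acceptsFrom (D : DFA α σ) (q : reach D) :
    (restrictReach D).acceptsFrom q = D.acceptsFrom q := by
  ext w
  exact Iff.of_eq (congrArg (· ∈ D.accept) (coe_restrictReach_evalFrom D q w))

theorem restrictReach_accepts (D : DFA α σ) : (restrictReach D).accepts = D.accepts :=
  restrictReach_acceptsFrom D _

theorem isMinimal_restrictReach {D : DFA α σ} (hD : Function.Injective D.acceptsFrom) :
    IsMinimal (restrictReach D) :=
  ⟨exists_restrictReach_evalFrom_start_eq D, fun q q' h ↦
    Subtype.ext (hD (by rwa [restrictReach_acceptsFrom, restrictReach_acceptsFrom] at h))⟩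

theorem nfaRev_eq_reverse (N : NFA α σ) : nfaRev N = N.reverse := rfl

theorem dfaRev_eq_toNFA_reverse (A : DFA α σ) : dfaRev A = A.toNFA.reverse := by
  simp only [dfaRev, NFA.reverse, DFA.toNFA, Set.mem_singleton_iff, eq_comm]

theorem nfaRev_accepts (N : NFA α σ) : (nfaRev N).accepts = N.accepts.reverse := by
  ext w
  exact NFA.mem_accepts_reverse

theorem dfaRev_accepts (A : DFA α σ) : (dfaRev A).accepts = A.accepts.reverse := by
  rw [dfaRev_eq_toNFA_reverse, ← nfaRev_eq_reverse, nfaRev_accepts, DFA.toNFA_correct]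

theorem mem_toDFA_dfaRev_acceptsFrom (A : DFA α σ) (S : Set σ) (w : List α) :
    w ∈ (dfaRev A).toDFA.acceptsFrom S ↔ A.eval w.reverse ∈ S := by
  have h := (A.toNFA.disjoint_evalFrom_reverse_iff (x := w) (S := {A.start}) (S' := S)).not
  rw [DFA.toNFA_evalFrom_match, Set.disjoint_singleton_left, Set.disjoint_singleton_right,
    not_not, not_not, ← dfaRev_eq_toNFA_reverse] at h
  change (∃ s ∈ (dfaRev A).evalFrom S w, s = A.start) ↔ _
  rwa [exists_eq_right]

theorem toDFA_dfaRev_acceptsFrom_injective {A : DFA α σ}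
    (hA : ∀ q : σ, ∃ w : List α, A.evalFrom A.start w = q) :
    Function.Injective (dfaRev A).toDFA.acceptsFrom := by
  intro S S' h
  ext q
  obtain ⟨w, rfl⟩ := hA q
  change A.eval w ∈ S ↔ A.eval w ∈ S'
  rw [← w.reverse_reverse, ← mem_toDFA_dfaRev_acceptsFrom, ← mem_toDFA_dfaRev_acceptsFrom, h]

end

/-- Brzozowski's theorem: for any NFA `N`, the automaton obtained by twice applying reversal,
subset-construction determinization, and removal of states unreachable from the initial
state(s), i.e. `N' = [reachable ∘ determinize ∘ reverse]²(N)`, is the minimal DFA accepting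
the same language as `N`. -/
theorem brzozowski {α σ : Type*} (N : NFA α σ) :
    IsMinimal (restrictReach (dfaRev (restrictReach (nfaRev N).toDFA)).toDFA) ∧
      (restrictReach (dfaRev (restrictReach (nfaRev N).toDFA)).toDFA).accepts = N.accepts := by
  refine ⟨isMinimal_restrictReach (toDFA_dfaRev_acceptsFrom_injective
    (exists_restrictReach_evalFrom_start_eq _)), ?_⟩
  rw [restrictReach_accepts, NFA.toDFA_correct, dfaRev_accepts, restrictReach_accepts,
    NFA.toDFA_correct, nfaRev_accepts, Language.reverse_reverse]
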